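/- arXiv:1401.6402 — 3 statements merged into one kernel-verified Lean document; each statement's English description precedes it below -/
import Mathlib

section
/- Let G be a finite group acting orthogonally on E via α, and suppose the set {α(g) : g ∈ G} does not lie in any proper affine subspace of L(E). Then for every η ∈ L(E) the Hessian bilinear form of log Z at η is positive definite: for every nonzero ω ∈ L(E), ω · (DW(η) ω) > 0, where DW(η)ω = ⟨(α·ω)α⟩_η − (W(η)·ω) W(η) and ⟨·⟩_η denotes the Z-weighted average. -/
/-!
The Hessian of `log Z` at `η`, evaluated on `ω`, is the variance of the random variable
`g ↦ ω · α(g)` under the Gibbs weights `exp(η · α(g)) / (|G| Z(η))`. These weights are strictly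
positive, so the variance vanishes only if `ω · α(g)` is constant in `g`. But a nonzero linear
functional cannot be constant on a set whose affine span is the whole space.
-/

open scoped RealInnerProductSpace

/-- The trace inner product on linear endomorphisms: `M·N = tr(M* ∘ N)`. -/
noncomputable def tinner {E : Type*} [NormedAddCommGroup E] [InnerProductSpace ℝ E]
    [FiniteDimensional ℝ E] (M N : E →ₗ[ℝ] E) : ℝ :=
  LinearMap.trace ℝ E (LinearMap.adjoint M ∘ₗ N)

theorem LinearMap.exists_apply_ne_of_affineSpan_eq_top {k V W : Type*} [Ring k]
    [AddCommGroup V] [Module k V] [AddCommGroup W] [Module k W] {s : Set V}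
    (hs : affineSpan k s = ⊤) {f : V →ₗ[k] W} (hf : f ≠ 0) :
    ∃ x ∈ s, ∃ y ∈ s, f x ≠ f y := by
  obtain ⟨x₀, hx₀⟩ := AffineSubspace.nonempty_of_affineSpan_eq_top k V V hs
  by_contra! hconst
  have hf_const : f.toAffineMap = AffineMap.const k V (f x₀) :=
    AffineMap.ext_on hs fun x hx => hconst x hx x₀ hx₀
  refine hf (LinearMap.ext fun v => ?_)
  have hv := congr($hf_const v)
  have h0 := congr($hf_const 0)
  simp only [LinearMap.coe_toAffineMap, AffineMap.const_apply, map_zero] at hv h0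
  rw [hv, ← h0, zero_apply]

section WeightedVariance

variable {ι : Type*} (s : Finset ι) (p x : ι → ℝ)

theorem Finset.weighted_variance_eq (hp : ∑ i ∈ s, p i = 1) :
    ∑ i ∈ s, p i * x i ^ 2 - (∑ i ∈ s, p i * x i) ^ 2
      = ∑ i ∈ s, p i * (x i - ∑ j ∈ s, p j * x j) ^ 2 := by
  set m := ∑ j ∈ s, p j * x j
  have hexpand : ∀ i, p i * (x i - m) ^ 2 = p i * x i ^ 2 - 2 * m * (p i * x i) + m ^ 2 * p i :=
    fun i => by ring
  simp only [hexpand, Finset.sum_add_distrib, Finset.sum_sub_distrib, ← Finset.mul_sum, hp]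
  ring

theorem Finset.weighted_variance_pos (hp_pos : ∀ i ∈ s, 0 < p i) (hp : ∑ i ∈ s, p i = 1)
    (hx : ∃ i ∈ s, ∃ j ∈ s, x i ≠ x j) :
    0 < ∑ i ∈ s, p i * x i ^ 2 - (∑ i ∈ s, p i * x i) ^ 2 := by
  rw [Finset.weighted_variance_eq s p x hp]
  set m := ∑ j ∈ s, p j * x j
  have hoff_mean : ∃ i ∈ s, x i ≠ m := by
    obtain ⟨i, hi, j, hj, hij⟩ := hx
    by_contra! h
    exact hij ((h i hi).trans (h j hj).symm)
  obtain ⟨i, hi, hxi⟩ := hoff_mean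
  refine Finset.sum_pos' (fun j hj => mul_nonneg (hp_pos j hj).le (sq_nonneg _)) ⟨i, hi, ?_⟩
  exact mul_pos (hp_pos i hi) (sq_pos_of_ne_zero (sub_ne_zero.mpr hxi))

end WeightedVariance

section TraceInner

variable {E : Type*} [NormedAddCommGroup E] [InnerProductSpace ℝ E] [FiniteDimensional ℝ E]

noncomputable def tinnerRight (M : E →ₗ[ℝ] E) : (E →ₗ[ℝ] E) →ₗ[ℝ] ℝ :=
  LinearMap.trace ℝ E ∘ₗ LinearMap.mulLeft ℝ (LinearMap.adjoint M)

@[simp]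
theorem tinnerRight_apply (M N : E →ₗ[ℝ] E) : tinnerRight M N = tinner M N := rfl

theorem tinner_eq_sum_inner {ι : Type*} [Fintype ι] (b : OrthonormalBasis ι ℝ E)
    (M N : E →ₗ[ℝ] E) : tinner M N = ∑ i, ⟪M (b i), N (b i)⟫ := by
  simp [tinner, LinearMap.trace_eq_sum_inner _ b, LinearMap.adjoint_inner_right]

theorem tinner_comm (M N : E →ₗ[ℝ] E) : tinner M N = tinner N M := by
  simp [tinner_eq_sum_inner (stdOrthonormalBasis ℝ E), real_inner_comm]

theorem tinner_self_pos {M : E →ₗ[ℝ] E} (hM : M ≠ 0) : 0 < tinner M M := by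
  set b := stdOrthonormalBasis ℝ E
  rw [tinner_eq_sum_inner b]
  refine Finset.sum_pos' (fun i _ => real_inner_self_nonneg) ?_
  by_contra! hzero
  refine hM (b.toBasis.ext fun i => ?_)
  rw [b.coe_toBasis, LinearMap.zero_apply]
  exact inner_self_eq_zero.mp (le_antisymm (hzero i (Finset.mem_univ i)) real_inner_self_nonneg)

end TraceInner

theorem stmt_8_general {E : Type*} [NormedAddCommGroup E] [InnerProductSpace ℝ E]
    [FiniteDimensional ℝ E] {G : Type*} [Fintype G]
    (α : G → E →ₗ[ℝ] E)
    (hspan : affineSpan ℝ (Set.range fun g : G => α g) = ⊤)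
    (Z : (E →ₗ[ℝ] E) → ℝ)
    (hZ : ∀ η, Z η = (Fintype.card G : ℝ)⁻¹ * ∑ g : G, Real.exp (tinner η (α g)))
    (W : (E →ₗ[ℝ] E) → (E →ₗ[ℝ] E))
    (hW : ∀ η, W η = ((Fintype.card G : ℝ) * Z η)⁻¹ •
      ∑ g : G, Real.exp (tinner η (α g)) • α g)
    (η ω : E →ₗ[ℝ] E) (hω : ω ≠ 0) :
    0 < tinner ω
      (((Fintype.card G : ℝ) * Z η)⁻¹ •
          ∑ g : G, Real.exp (tinner η (α g)) • (tinner ω (α g) • α g)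
        - tinner (W η) ω • W η) := by
  set c := (Fintype.card G : ℝ) * Z η with hc_def
  set p : G → ℝ := fun g => c⁻¹ * Real.exp (tinner η (α g))
  set x : G → ℝ := fun g => tinner ω (α g)
  obtain ⟨_, ⟨g₁, rfl⟩, _, ⟨g₂, rfl⟩, hx⟩ :=
    LinearMap.exists_apply_ne_of_affineSpan_eq_top hspan
      (f := tinnerRight ω) fun h => (tinner_self_pos hω).ne' congr($h ω)
  have : Nonempty G := ⟨g₁⟩
  have hc : c = ∑ g, Real.exp (tinner η (α g)) := by
    rw [hc_def, hZ, mul_inv_cancel_left₀ (Nat.cast_ne_zero.mpr Fintype.card_ne_zero)]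
  have hc_pos : 0 < c := hc ▸ Finset.sum_pos (fun g _ => Real.exp_pos _) Finset.univ_nonempty
  have hp_pos : ∀ g ∈ Finset.univ, 0 < p g := fun g _ => by positivity
  have hp_sum : ∑ g, p g = 1 := by rw [← Finset.mul_sum, ← hc, inv_mul_cancel₀ hc_pos.ne']
  have hmean : tinner ω (W η) = ∑ g, p g * x g := by
    rw [hW, ← tinnerRight_apply, map_smul, map_sum]
    simp only [map_smul, smul_eq_mul, tinnerRight_apply, Finset.mul_sum, p, x, c, mul_assoc]
  have hvalue : tinner ω (c⁻¹ • ∑ g, Real.exp (tinner η (α g)) • (tinner ω (α g) • α g)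
      - tinner (W η) ω • W η) = ∑ g, p g * x g ^ 2 - (∑ g, p g * x g) ^ 2 := by
    rw [tinner_comm (W η), hmean, ← tinnerRight_apply, map_sub, map_smul, map_smul, map_sum,
      tinnerRight_apply ω (W η), hmean]
    simp only [map_smul, smul_eq_mul, tinnerRight_apply, Finset.mul_sum, p, x, sq, mul_assoc]
  rw [hvalue]
  exact Finset.weighted_variance_pos _ p x hp_pos hp_sum
    ⟨g₁, Finset.mem_univ g₁, g₂, Finset.mem_univ g₂, hx⟩

theorem stmt_8 {E : Type*} [NormedAddCommGroup E] [InnerProductSpace ℝ E]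
    [FiniteDimensional ℝ E] {G : Type*} [Group G] [Fintype G]
    (α : G → E →ₗ[ℝ] E)
    (hone : α 1 = LinearMap.id)
    (hmul : ∀ g h : G, α (g * h) = α g ∘ₗ α h)
    (horth : ∀ (g : G) (x y : E), ⟪α g x, α g y⟫ = ⟪x, y⟫)
    (hspan : affineSpan ℝ (Set.range fun g : G => α g) = ⊤)
    (Z : (E →ₗ[ℝ] E) → ℝ)
    (hZ : ∀ η, Z η = (Fintype.card G : ℝ)⁻¹ * ∑ g : G, Real.exp (tinner η (α g)))
    (W : (E →ₗ[ℝ] E) → (E →ₗ[ℝ] E))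
    (hW : ∀ η, W η = ((Fintype.card G : ℝ) * Z η)⁻¹ •
      ∑ g : G, Real.exp (tinner η (α g)) • α g)
    (η ω : E →ₗ[ℝ] E) (hω : ω ≠ 0) :
    0 < tinner ω
      (((Fintype.card G : ℝ) * Z η)⁻¹ •
          ∑ g : G, Real.exp (tinner η (α g)) • (tinner ω (α g) • α g)
        - tinner (W η) ω • W η) :=
  stmt_8_general α hspan Z hZ W hW η ω hω
end

section
/- Suppose a group G acts absolutely irreducibly on ℝⁿ via orthogonal matrices α(g), and let h : M_n(ℝ) → ℝ be a quadratic form invariant under the left action M ↦ α(g)M. Then there exists a symmetric n×n matrix A such that h(M) = ∑_{k=1}^n m_k A m_kᵀ, where m_k denotes the k-th row of M. Equivalently, h is a linear combination of the pairwise scalar products of the columns of M. -/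
/-!
The columns of `M` transform independently under `M ↦ α(g) M`, so `H` splits into the bilinear
forms `(x, y) ↦ H (x eᵢᵀ) (y eⱼᵀ)` on `ℝⁿ`, one for each pair of columns `i, j`. Each of them is
`α`-invariant, so its Gram matrix `F` satisfies `α(g)ᵀ F α(g) = F`; as `α(g)` is orthogonal this
says that `F` commutes with every `α(g)`, hence `F = A i j • 1` by absolute irreducibility.
-/

open Matrix

namespace Matrix

variable {R m n : Type*} [CommRing R]

theorem isOrthogonal_mul_left [Fintype m] {H : LinearMap.BilinForm R (Matrix m n R)}
    (h2 : IsLeftRegular (2 : R)) (hH : H.IsSymm) {U : Matrix m m R}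
    (hU : ∀ M, H (U * M) (U * M) = H M M) : LinearMap.IsOrthogonal H (U * ·) :=
  LinearMap.isOrthogonal_of_forall_apply_same
    ({ toFun := (U * ·), map_add' := Matrix.mul_add U, map_smul' := Matrix.mul_smul U } :
      Matrix m n R →ₗ[R] Matrix m n R)
    h2 (LinearMap.BilinForm.isSymm_iff.mp hH) hU

theorem commute_of_transpose_mul_self_eq_one [Fintype m] [DecidableEq m] {U F : Matrix m m R}
    (hU : Uᵀ * U = 1) (hF : Uᵀ * F * U = F) : F * U = U * F :=
  calc F * U = U * Uᵀ * (F * U) := by rw [mul_eq_one_comm.mp hU, Matrix.one_mul]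
    _ = U * (Uᵀ * F * U) := by simp only [Matrix.mul_assoc]
    _ = U * F := by rw [hF]

variable [DecidableEq m] [DecidableEq n]

/-- For columns `i j`, the Gram matrix of the bilinear form `(x, y) ↦ H (x eᵢᵀ) (y eⱼᵀ)`. -/
def columnBlock (H : LinearMap.BilinForm R (Matrix m n R)) (i j : n) : Matrix m m R :=
  of fun p q => H (single p i 1) (single q j 1)

theorem columnBlock_transpose {H : LinearMap.BilinForm R (Matrix m n R)} (hH : H.IsSymm)
    (i j : n) : (columnBlock H i j)ᵀ = columnBlock H j i := by
  ext p q
  exact hH.eq _ _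

variable [Fintype m] [Fintype n]

theorem bilinForm_apply_eq_sum_columnBlock (H : LinearMap.BilinForm R (Matrix m n R))
    (M N : Matrix m n R) :
    H M N = ∑ p, ∑ i, ∑ q, ∑ j, M p i * N q j * columnBlock H i j p q := by
  have hsingle (A : Matrix m n R) p i : single p i (A p i) = A p i • single p i 1 := by
    simp [smul_single]
  conv_lhs => rw [matrix_eq_sum_single M]
  simp only [hsingle, map_sum, map_smul, LinearMap.sum_apply, LinearMap.smul_apply, smul_eq_mul]
  refine Finset.sum_congr rfl fun p _ => Finset.sum_congr rfl fun i _ => ?_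
  conv_lhs => rw [matrix_eq_sum_single N]
  simp only [hsingle, map_sum, map_smul, smul_eq_mul, Finset.mul_sum, columnBlock, of_apply]
  ac_rfl

theorem transpose_mul_columnBlock_mul {H : LinearMap.BilinForm R (Matrix m n R)}
    {U : Matrix m m R} (hU : LinearMap.IsOrthogonal H (U * ·)) (i j : n) :
    Uᵀ * columnBlock H i j * U = columnBlock H i j := by
  ext p q
  have hUsingle (r a : m) (k b : n) :
      (U * single r k (1 : R)) a b = if b = k then U a r else 0 := by
    split_ifs with h
    · subst h; simp
    · simp [h]
  conv_rhs => rw [columnBlock, of_apply, ← hU, bilinForm_apply_eq_sum_columnBlock]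
  simp only [columnBlock, mul_apply, transpose_apply, of_apply, Finset.sum_mul, hUsingle, mul_ite,
    ite_mul, zero_mul, mul_zero, Finset.sum_ite_eq', Finset.mem_univ, ↓reduceIte,
    Finset.sum_ite_irrel, Finset.sum_const_zero]
  rw [Finset.sum_comm]
  simp only [mul_right_comm]

theorem bilinForm_apply_eq_of_columnBlock_eq_smul_one {H : LinearMap.BilinForm R (Matrix m n R)}
    {A : Matrix n n R} (hA : ∀ i j, columnBlock H i j = A i j • 1) (M N : Matrix m n R) :
    H M N = ∑ k, ∑ i, ∑ j, M k i * A i j * N k j := by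
  simp only [bilinForm_apply_eq_sum_columnBlock H M N, hA, smul_apply, one_apply, smul_eq_mul,
    mul_ite, mul_one, mul_zero]
  refine Finset.sum_congr rfl fun k _ => Finset.sum_congr rfl fun i _ => ?_
  rw [Finset.sum_comm]
  simp [mul_right_comm]

end Matrix

theorem stmt_9_general {n : ℕ} {G : Type*}
    (α : G → Matrix (Fin n) (Fin n) ℝ)
    (horth : ∀ g : G, (α g)ᵀ * α g = 1)
    (hirr : ∀ B : Matrix (Fin n) (Fin n) ℝ,
      (∀ g : G, B * α g = α g * B) → ∃ c : ℝ, B = c • (1 : Matrix (Fin n) (Fin n) ℝ))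
    (H : Matrix (Fin n) (Fin n) ℝ →ₗ[ℝ] Matrix (Fin n) (Fin n) ℝ →ₗ[ℝ] ℝ)
    (hsymm : ∀ M N, H M N = H N M)
    (hinv : ∀ (g : G) (M : Matrix (Fin n) (Fin n) ℝ), H (α g * M) (α g * M) = H M M) :
    ∃ A : Matrix (Fin n) (Fin n) ℝ, Aᵀ = A ∧
      ∀ M : Matrix (Fin n) (Fin n) ℝ,
        H M M = ∑ k : Fin n, ∑ i : Fin n, ∑ j : Fin n, M k i * A i j * M k j := by
  have hH : LinearMap.BilinForm.IsSymm H := ⟨hsymm⟩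
  have hblock (i j : Fin n) : ∃ c : ℝ, columnBlock H i j = c • 1 :=
    hirr _ fun g => commute_of_transpose_mul_self_eq_one (horth g) <|
      transpose_mul_columnBlock_mul
        (isOrthogonal_mul_left (IsRegular.of_ne_zero two_ne_zero).left hH (hinv g)) i j
  choose c hc using hblock
  refine ⟨of c, ?_, fun M => bilinForm_apply_eq_of_columnBlock_eq_smul_one hc M M⟩
  ext i j
  simpa [hc] using congr_fun₂ (columnBlock_transpose hH j i) i i

theorem stmt_9 {n : ℕ} {G : Type*} [Group G]
    (α : G → Matrix (Fin n) (Fin n) ℝ)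
    (hone : α 1 = 1)
    (hmul : ∀ g h : G, α (g * h) = α g * α h)
    (horth : ∀ g : G, (α g)ᵀ * α g = 1)
    (hirr : ∀ B : Matrix (Fin n) (Fin n) ℝ,
      (∀ g : G, B * α g = α g * B) → ∃ c : ℝ, B = c • (1 : Matrix (Fin n) (Fin n) ℝ))
    (H : Matrix (Fin n) (Fin n) ℝ →ₗ[ℝ] Matrix (Fin n) (Fin n) ℝ →ₗ[ℝ] ℝ)
    (hsymm : ∀ M N, H M N = H N M)
    (hinv : ∀ (g : G) (M : Matrix (Fin n) (Fin n) ℝ), H (α g * M) (α g * M) = H M M) :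
    ∃ A : Matrix (Fin n) (Fin n) ℝ, Aᵀ = A ∧
      ∀ M : Matrix (Fin n) (Fin n) ℝ,
        H M M = ∑ k : Fin n, ∑ i : Fin n, ∑ j : Fin n, M k i * A i j * M k j :=
  stmt_9_general α horth hirr H hsymm hinv
end

section
/- Every D₃-invariant polynomial on ℝ², for the standard action of D₃ generated by rotation by 2π/3 and reflection in the x-axis, is a polynomial in X = x² + u² and Y = x³ − 3xu². -/
open Matrix MvPolynomial

/-- Rotation of the plane by `2π/3`. -/
noncomputable def rot3 : Matrix (Fin 2) (Fin 2) ℝ :=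
  !![-(1/2), -(Real.sqrt 3/2); Real.sqrt 3/2, -(1/2)]

/-- Reflection in the `x`-axis. -/
noncomputable def refl0 : Matrix (Fin 2) (Fin 2) ℝ := !![1, 0; 0, -1]

/-- Substitution of a linear change of variables into a polynomial in two
variables: `(substM g P)(x) = P(g x)`. -/
noncomputable def substM (g : Matrix (Fin 2) (Fin 2) ℝ) :
    MvPolynomial (Fin 2) ℝ →ₐ[ℝ] MvPolynomial (Fin 2) ℝ :=
  MvPolynomial.aeval (fun i : Fin 2 => ∑ j : Fin 2, MvPolynomial.C (g i j) * MvPolynomial.X j)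

/-- The basic invariant `X = x² + u²`. -/
noncomputable def polyX : MvPolynomial (Fin 2) ℝ :=
  MvPolynomial.X 0 ^ 2 + MvPolynomial.X 1 ^ 2

/-- The basic invariant `Y = x³ − 3xu²`. -/
noncomputable def polyY : MvPolynomial (Fin 2) ℝ :=
  MvPolynomial.X 0 ^ 3 - 3 * MvPolynomial.X 0 * MvPolynomial.X 1 ^ 2

/-!
Invariance under the reflection `u ↦ -u` forces only even powers of `u`, so `P ∈ ℝ[x, u²] = ℝ[x, X]`.
Since `4 x³ = Y + 3 X x`, this ring is `ℝ[X, Y] + ℝ[X, Y] x + ℝ[X, Y] x²`. Writing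
`P = a + b x + c x²` with `a, b, c ∈ ℝ[X, Y]` and averaging over the rotation group `⟨σ⟩`, which fixes
`X` and `Y`, gives `3 P = 3 a + b (x + σx + σ²x) + c (x² + (σx)² + (σ²x)²) = 3 a + (3/2) c X`.
-/

namespace D3Invariants

abbrev R := MvPolynomial (Fin 2) ℝ

lemma substM_X (g : Matrix (Fin 2) (Fin 2) ℝ) (i : Fin 2) :
    substM g (X i) = C (g i 0) * X 0 + C (g i 1) * X 1 := by
  simp [substM, Fin.sum_univ_two]

lemma substM_C (g : Matrix (Fin 2) (Fin 2) ℝ) (r : ℝ) : substM g (C r) = C r :=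
  aeval_C _ _

noncomputable def sqrt3 : R := C (Real.sqrt 3)

lemma sqrt3_sq : sqrt3 ^ 2 = 3 := by
  rw [sqrt3, ← map_pow, Real.sq_sqrt (by norm_num), map_ofNat]

lemma two_mul_C_half : (2 : R) * C (1 / 2) = 1 := by
  rw [← map_ofNat C 2, ← C_mul]; norm_num

lemma two_mul_substM_rot3_X0 : 2 * substM rot3 (X 0) = -X 0 - sqrt3 * X 1 := by
  rw [substM_X, sqrt3]
  simp only [rot3, of_apply, cons_val', cons_val_zero, cons_val_one, empty_val',
    cons_val_fin_one, map_neg, div_eq_mul_one_div (Real.sqrt 3), C_mul]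
  linear_combination (-X 0 - C (Real.sqrt 3) * X 1) * two_mul_C_half

lemma two_mul_substM_rot3_X1 : 2 * substM rot3 (X 1) = sqrt3 * X 0 - X 1 := by
  rw [substM_X, sqrt3]
  simp only [rot3, of_apply, cons_val', cons_val_zero, cons_val_one, empty_val',
    cons_val_fin_one, map_neg, div_eq_mul_one_div (Real.sqrt 3), C_mul]
  linear_combination (C (Real.sqrt 3) * X 0 - X 1) * two_mul_C_half

lemma two_mul_substM_rot3_sq_X0 :
    2 * substM rot3 (substM rot3 (X 0)) = -X 0 + sqrt3 * X 1 := by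
  have hsqrt3 : substM rot3 sqrt3 = sqrt3 := substM_C _ _
  refine mul_left_cancel₀ (two_ne_zero (α := R)) ?_
  calc 2 * (2 * substM rot3 (substM rot3 (X 0)))
      = 2 * substM rot3 (2 * substM rot3 (X 0)) := by rw [map_mul, map_ofNat]
    _ = 2 * substM rot3 (-X 0 - sqrt3 * X 1) := by rw [two_mul_substM_rot3_X0]
    _ = -(2 * substM rot3 (X 0)) - sqrt3 * (2 * substM rot3 (X 1)) := by
      rw [map_sub, map_neg, map_mul, hsqrt3]; ring
    _ = 2 * (-X 0 + sqrt3 * X 1) := by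
      rw [two_mul_substM_rot3_X0, two_mul_substM_rot3_X1]
      linear_combination (-X 0) * sqrt3_sq

lemma substM_rot3_polyX : substM rot3 polyX = polyX := by
  refine mul_left_cancel₀ (by norm_num : (4 : R) ≠ 0) ?_
  calc 4 * substM rot3 polyX = (2 * substM rot3 (X 0)) ^ 2 + (2 * substM rot3 (X 1)) ^ 2 := by
        rw [polyX, map_add, map_pow, map_pow]; ring
    _ = 4 * polyX := by
      rw [two_mul_substM_rot3_X0, two_mul_substM_rot3_X1, polyX]
      linear_combination (X 0 ^ 2 + X 1 ^ 2) * sqrt3_sq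

lemma substM_rot3_polyY : substM rot3 polyY = polyY := by
  refine mul_left_cancel₀ (by norm_num : (8 : R) ≠ 0) ?_
  calc 8 * substM rot3 polyY
      = (2 * substM rot3 (X 0)) ^ 3
        - 3 * (2 * substM rot3 (X 0)) * (2 * substM rot3 (X 1)) ^ 2 := by
        rw [polyY, map_sub, map_mul, map_mul, map_pow, map_pow, map_ofNat]; ring
    _ = 8 * polyY := by
      rw [two_mul_substM_rot3_X0, two_mul_substM_rot3_X1, polyY]
      linear_combination (sqrt3 * (3 * X 0 ^ 2 * X 1 - X 1 ^ 3)
        + 3 * (X 0 ^ 3 - 3 * X 0 * X 1 ^ 2)) * sqrt3_sq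

lemma substM_aeval_polyX_polyY {g : Matrix (Fin 2) (Fin 2) ℝ}
    (hX : substM g polyX = polyX) (hY : substM g polyY = polyY) (Q : R) :
    substM g (aeval ![polyX, polyY] Q) = aeval ![polyX, polyY] Q := by
  rw [comp_aeval_apply]
  congr 2
  ext i
  fin_cases i <;> simp [hX, hY]

lemma monomial_eq_C_mul_X_pow_mul_X_pow {S : Type*} [CommSemiring S] (d : Fin 2 →₀ ℕ) (r : S) :
    (monomial d r : MvPolynomial (Fin 2) S) = C r * X 0 ^ d 0 * X 1 ^ d 1 := by
  rw [monomial_eq, Finsupp.prod_fintype _ _ fun _ => pow_zero _, Fin.prod_univ_two, mul_assoc]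

lemma substM_refl0_monomial (d : Fin 2 →₀ ℕ) (r : ℝ) :
    substM refl0 (monomial d r) = monomial d ((-1) ^ d 1 * r) := by
  have hX0 : substM refl0 (X 0) = X 0 := by simp [substM_X, refl0]
  have hX1 : substM refl0 (X 1) = -X 1 := by simp [substM_X, refl0]
  rw [monomial_eq_C_mul_X_pow_mul_X_pow, monomial_eq_C_mul_X_pow_mul_X_pow, map_mul, map_mul,
    map_pow, map_pow, substM_C, hX0, hX1, neg_pow, C_mul, C_pow, map_neg, C_1]
  ring

lemma coeff_substM_refl0 (d : Fin 2 →₀ ℕ) (P : R) :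
    coeff d (substM refl0 P) = (-1) ^ d 1 * coeff d P := by
  induction P using MvPolynomial.induction_on' with
  | monomial e r =>
    rw [substM_refl0_monomial, coeff_monomial, coeff_monomial]
    split_ifs with h
    · rw [h]
    · rw [mul_zero]
  | add P Q hP hQ => rw [map_add, coeff_add, coeff_add, hP, hQ, mul_add]

lemma mem_adjoin_of_substM_refl0_eq {P : R} (h : substM refl0 P = P) :
    P ∈ Algebra.adjoin ℝ {X 0, X 1 ^ 2} := by
  rw [P.as_sum]
  refine Subalgebra.sum_mem _ fun d hd => ?_
  obtain ⟨k, hk⟩ : Even (d 1) := by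
    by_contra hodd
    have hcoeff := coeff_substM_refl0 d P
    rw [h, (Nat.not_even_iff_odd.mp hodd).neg_one_pow] at hcoeff
    exact mem_support_iff.mp hd (by linarith)
  rw [monomial_eq_C_mul_X_pow_mul_X_pow, hk, ← two_mul, pow_mul]
  refine mul_mem (mul_mem (Subalgebra.algebraMap_mem _ _) (pow_mem ?_ _)) (pow_mem ?_ _)
  · exact Algebra.subset_adjoin (Set.mem_insert _ _)
  · exact Algebra.subset_adjoin (Set.mem_insert_of_mem _ rfl)

local notation "ψ" => aeval (R := ℝ) ![polyX, polyY]

lemma aeval_X0 : ψ (X 0) = polyX := by simp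
lemma aeval_X1 : ψ (X 1) = polyY := by simp

lemma four_mul_X0_pow_three : 4 * X 0 ^ 3 = polyY + 3 * polyX * X 0 := by
  rw [polyX, polyY]; ring

noncomputable def adjoinX0 : Subalgebra ℝ R where
  carrier := {P | ∃ A B D : R, P = ψ A + ψ B * X 0 + ψ D * X 0 ^ 2}
  algebraMap_mem' r := ⟨C r, 0, 0, by simp [MvPolynomial.algebraMap_eq]⟩
  add_mem' := by
    rintro _ _ ⟨A, B, D, rfl⟩ ⟨A', B', D', rfl⟩
    exact ⟨A + A', B + B', D + D', by simp only [map_add]; ring⟩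
  mul_mem' := by
    rintro _ _ ⟨A, B, D, rfl⟩ ⟨A', B', D', rfl⟩
    refine ⟨A * A' + C (1 / 2) ^ 2 * (B * D' + D * B') * X 1,
      A * B' + B * A' + C (1 / 2) ^ 2 * (3 * (B * D' + D * B') * X 0 + D * D' * X 1),
      A * D' + B * B' + D * A' + 3 * C (1 / 2) ^ 2 * D * D' * X 0, ?_⟩
    simp only [map_add, map_mul, map_pow, map_ofNat, aeval_C, aeval_X0, aeval_X1,
      MvPolynomial.algebraMap_eq]
    linear_combination (ψ B * ψ D' + ψ D * ψ B' + ψ D * ψ D' * X 0) *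
      (C (1 / 2) ^ 2 * four_mul_X0_pow_three - X 0 ^ 3 * (2 * C (1 / 2) + 1) * two_mul_C_half)

lemma X0_mem_adjoinX0 : X 0 ∈ adjoinX0 := ⟨0, 1, 0, by simp⟩

lemma X1_sq_mem_adjoinX0 : X 1 ^ 2 ∈ adjoinX0 :=
  ⟨X 0, 0, -1, by rw [aeval_X0, polyX, map_zero, map_neg, map_one]; ring⟩

lemma adjoin_X0_X1_sq_le_adjoinX0 : Algebra.adjoin ℝ {X 0, X 1 ^ 2} ≤ adjoinX0 := by
  rw [Algebra.adjoin_le_iff, Set.insert_subset_iff, Set.singleton_subset_iff]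
  exact ⟨X0_mem_adjoinX0, X1_sq_mem_adjoinX0⟩

lemma exists_aeval_eq_of_mem_adjoinX0 {P : R} (hP : P ∈ adjoinX0) (hrot : substM rot3 P = P) :
    ∃ Q, ψ Q = P := by
  obtain ⟨A, B, D, hP₀⟩ := hP
  have hfix := substM_aeval_polyX_polyY substM_rot3_polyX substM_rot3_polyY
  set s₁ := substM rot3 (X 0)
  set s₂ := substM rot3 s₁
  have hP₁ : P = ψ A + ψ B * s₁ + ψ D * s₁ ^ 2 := by
    conv_lhs => rw [← hrot, hP₀]
    simp only [map_add, map_mul, map_pow, hfix, s₁]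
  have hP₂ : P = ψ A + ψ B * s₂ + ψ D * s₂ ^ 2 := by
    conv_lhs => rw [← hrot, hP₁]
    simp only [map_add, map_mul, map_pow, hfix, s₂]
  have hpolyX : polyX = X 0 ^ 2 + X 1 ^ 2 := rfl
  have hs₁ : 2 * s₁ = -X 0 - sqrt3 * X 1 := two_mul_substM_rot3_X0
  have hs₂ : 2 * s₂ = -X 0 + sqrt3 * X 1 := two_mul_substM_rot3_sq_X0
  refine ⟨A + C (1 / 2) * D * X 0, mul_left_cancel₀ (by norm_num : (12 : R) ≠ 0) ?_⟩
  simp only [map_add, map_mul, aeval_C, aeval_X0, MvPolynomial.algebraMap_eq]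
  linear_combination -4 * hP₀ - 4 * hP₁ - 4 * hP₂ - 2 * ψ B * (hs₁ + hs₂)
    - ψ D * ((2 * s₁ - X 0 - sqrt3 * X 1) * hs₁ + (2 * s₂ - X 0 + sqrt3 * X 1) * hs₂)
    - 2 * ψ D * X 1 ^ 2 * sqrt3_sq + 6 * ψ D * polyX * two_mul_C_half + 6 * ψ D * hpolyX

end D3Invariants

open D3Invariants in
theorem stmt_12 (P : MvPolynomial (Fin 2) ℝ)
    (hrot : substM rot3 P = P) (hrefl : substM refl0 P = P) :
    ∃ Q : MvPolynomial (Fin 2) ℝ, MvPolynomial.aeval ![polyX, polyY] Q = P := by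
  exact exists_aeval_eq_of_mem_adjoinX0
    (adjoin_X0_X1_sq_le_adjoinX0 (mem_adjoin_of_substM_refl0_eq hrefl)) hrot
end
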